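/- arXiv:2510.03937 — 3 statements merged into one kernel-verified Lean document; each statement's English description precedes it below -/
import Mathlib

section
/- If a Markov chain on the nonnegative integers is downward uniformly bounded with bound k (i.e., p_{ij} = 0 whenever i - j > k), then Kaplan's condition holds with B = k(k+1)/2: for every i and every z in [0,1), (z^i - sum_j p_{ij} z^j)/(1 - z) >= -k(k+1)/2. -/
open scoped ENNReal BigOperators
open Filter

/-- A discrete-time Markov chain on the nonnegative integers, given by its
row-stochastic transition matrix. -/
structure MarkovChain where
  p : ℕ → ℕ → ℝ≥0∞
  row_sum : ∀ i, ∑' j, p i j = 1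

namespace MarkovChain

/-- `n`-step transition probabilities. -/
noncomputable def step (M : MarkovChain) : ℕ → ℕ → ℕ → ℝ≥0∞
  | 0, i, j => if i = j then 1 else 0
  | (n+1), i, j => ∑' k, M.p i k * M.step n k j

/-- Irreducibility: every state reaches every other state with positive probability. -/
def Irreducible (M : MarkovChain) : Prop := ∀ i j, ∃ n, 0 < M.step n i j

/-- Probability, starting from `j`, that the chain reaches state `i` for the first
time at time `n` (time `0` counts iff `j = i`). -/
noncomputable def hitAt (M : MarkovChain) (i : ℕ) : ℕ → ℕ → ℝ≥0∞
  | 0, j => if j = i then 1 else 0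
  | (n+1), j => if j = i then 0 else ∑' k, M.p j k * M.hitAt i n k

/-- Probability that the first return to `i` occurs at time `n + 1`. -/
noncomputable def firstReturn (M : MarkovChain) (i n : ℕ) : ℝ≥0∞ :=
  ∑' k, M.p i k * M.hitAt i n k

/-- The chain is recurrent: return to each state is almost sure. -/
def Recurrent (M : MarkovChain) : Prop := ∀ i, ∑' n, M.firstReturn i n = 1

/-- The chain is positive recurrent: recurrent with finite expected return times. -/
def PositiveRecurrent (M : MarkovChain) : Prop :=
  M.Recurrent ∧ ∀ i, ∑' n : ℕ, ((n : ℝ≥0∞) + 1) * M.firstReturn i n < ⊤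

/-- Null recurrent: recurrent but not positive recurrent. -/
def NullRecurrent (M : MarkovChain) : Prop := M.Recurrent ∧ ¬ M.PositiveRecurrent

/-- The chain is transient: return to each state happens with probability `< 1`. -/
def Transient (M : MarkovChain) : Prop := ∀ i, ∑' n, M.firstReturn i n < 1

/-- Mean drift at state `i`. -/
noncomputable def drift (M : MarkovChain) (i : ℕ) : ℝ :=
  ∑' j, (M.p i j).toReal * ((j : ℝ) - i)

/-- The mean drift at `i` is finite (well-defined). -/
def DriftFinite (M : MarkovChain) (i : ℕ) : Prop :=
  Summable fun j => (M.p i j).toReal * ((j : ℝ) - i)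

/-- Second-moment drift at state `i`. -/
noncomputable def secondMoment (M : MarkovChain) (i : ℕ) : ℝ :=
  ∑' j, (M.p i j).toReal * ((j : ℝ) - i) ^ 2

/-- Downward uniformly bounded with bound `k`: no downward jumps longer than `k`. -/
def DownwardBounded (M : MarkovChain) (k : ℕ) : Prop :=
  ∀ i j, j + k < i → M.p i j = 0

/-- Uniformly bounded with bound `d`: no jumps longer than `d`. -/
def UniformlyBounded (M : MarkovChain) (d : ℕ) : Prop :=
  ∀ i j : ℕ, (d : ℤ) < |(i : ℤ) - j| → M.p i j = 0

end MarkovChain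

/-!
Downward boundedness puts all the mass of row `i` on states `j ≥ i - k`, so for `z ∈ [0, 1]`
the generating function `∑ⱼ pᵢⱼ zʲ` is at most `z ^ (i - k)`. Hence the numerator of Kaplan's
function is at least `z ^ i - z ^ (i - k) ≥ -(1 - z ^ r) ≥ -r (1 - z)` with `r = min i k ≤ k`,
by Bernoulli's inequality. This gives the bound `-k`, which is stronger than `-k (k + 1) / 2`.
-/

theorem pow_sub_pow_add_le_mul_one_sub {z : ℝ} (hz0 : 0 ≤ z) (hz1 : z ≤ 1) (m r : ℕ) :
    z ^ m - z ^ (m + r) ≤ r * (1 - z) := by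
  have bernoulli : 1 - r * (1 - z) ≤ z ^ r := by
    have h := one_add_mul_le_pow (a := z - 1) (by linarith) r
    rw [add_sub_cancel] at h
    linarith
  have hzm : z ^ m ≤ 1 := pow_le_one₀ hz0 hz1
  have hzr : z ^ r ≤ 1 := pow_le_one₀ hz0 hz1
  calc z ^ m - z ^ (m + r) = z ^ m * (1 - z ^ r) := by ring
    _ ≤ 1 - z ^ r := mul_le_of_le_one_left (by linarith) hzm
    _ ≤ r * (1 - z) := by linarith

namespace MarkovChain

variable (M : MarkovChain)

theorem p_ne_top (i j : ℕ) : M.p i j ≠ ⊤ :=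
  ne_top_of_le_ne_top ENNReal.one_ne_top ((ENNReal.le_tsum j).trans_eq (M.row_sum i))

theorem summable_toReal_p (i : ℕ) : Summable fun j => (M.p i j).toReal :=
  ENNReal.summable_toReal (by rw [M.row_sum i]; exact ENNReal.one_ne_top)

theorem tsum_toReal_p (i : ℕ) : ∑' j, (M.p i j).toReal = 1 := by
  rw [← ENNReal.tsum_toReal_eq (M.p_ne_top i), M.row_sum i, ENNReal.toReal_one]

theorem summable_toReal_p_mul_pow (i : ℕ) {z : ℝ} (hz0 : 0 ≤ z) (hz1 : z ≤ 1) :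
    Summable fun j => (M.p i j).toReal * z ^ j :=
  (M.summable_toReal_p i).of_nonneg_of_le (fun j => by positivity)
    fun j => mul_le_of_le_one_right ENNReal.toReal_nonneg (pow_le_one₀ hz0 hz1)

theorem tsum_toReal_p_mul_pow_le {k : ℕ} (hdb : M.DownwardBounded k) (i : ℕ) {z : ℝ}
    (hz0 : 0 ≤ z) (hz1 : z ≤ 1) :
    ∑' j, (M.p i j).toReal * z ^ j ≤ z ^ (i - k) :=
  calc ∑' j, (M.p i j).toReal * z ^ j ≤ ∑' j, (M.p i j).toReal * z ^ (i - k) := by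
        refine (M.summable_toReal_p_mul_pow i hz0 hz1).tsum_le_tsum (fun j => ?_)
          ((M.summable_toReal_p i).mul_right _)
        rcases lt_or_ge j (i - k) with hj | hj
        · simp [hdb i j (by omega)]
        · exact mul_le_mul_of_nonneg_left (pow_le_pow_of_le_one hz0 hz1 hj)
            ENNReal.toReal_nonneg
    _ = z ^ (i - k) := by rw [tsum_mul_right, M.tsum_toReal_p, one_mul]

theorem neg_le_kaplan {k : ℕ} (hdb : M.DownwardBounded k) (i : ℕ) {z : ℝ}
    (hz0 : 0 ≤ z) (hz1 : z < 1) :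
    -(k : ℝ) ≤ (z ^ i - ∑' j, (M.p i j).toReal * z ^ j) / (1 - z) := by
  have hpos : 0 < 1 - z := by linarith
  have hgen := M.tsum_toReal_p_mul_pow_le hdb i hz0 hz1.le
  have hgap : z ^ (i - k) - z ^ i ≤ (min i k : ℕ) * (1 - z) := by
    simpa [Nat.sub_add_min_cancel] using
      pow_sub_pow_add_le_mul_one_sub hz0 hz1.le (i - k) (min i k)
  have hmin : ((min i k : ℕ) : ℝ) * (1 - z) ≤ k * (1 - z) :=
    mul_le_mul_of_nonneg_right (by exact_mod_cast min_le_right i k) hpos.le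
  rw [le_div_iff₀ hpos]
  linarith

end MarkovChain

/-- a downward uniformly bounded chain satisfies Kaplan's condition
with `B = k (k + 1) / 2`. -/
theorem stmt3 (M : MarkovChain) (k : ℕ) (hdb : M.DownwardBounded k) :
    ∀ i : ℕ, ∀ z : ℝ, 0 ≤ z → z < 1 →
      -((k : ℝ) * (k + 1) / 2) ≤ (z ^ i - ∑' j, (M.p i j).toReal * z ^ j) / (1 - z) := by
  intro i z hz0 hz1
  have hk : (k : ℝ) ≤ k * (k + 1) / 2 := by
    have hsq : (k : ℝ) ≤ k * k := by exact_mod_cast Nat.le_mul_self k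
    linarith
  linarith [M.neg_le_kaplan hdb i hz0 hz1]
end

section
/- For coprime positive integers m, n, the chain with p_{i,i+n} = m/(m+n) for all i, p_{i,i-m} = n/(m+n) for i >= m, and p_{ii} = n/(m+n) for i < m, is null recurrent. -/
open scoped ENNReal BigOperators
open Filter

/-! Above `m` the walk has mean jump zero. For recurrence, `log (1 + x)` is superharmonic there
by concavity, so by optional stopping the walk started at `j` leaves the band `(m, R]` upward with
probability at most `log (1 + j) / log (2 + R)`; since an irreducible chain leaves every finite set,
it returns to `[0, m]` almost surely, and a maximum principle for the probability of never hitting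
a state turns this into recurrence. For null recurrence, `X_t` itself is a martingale above `m`, so
the walk started at `m + n` stays above `m` up to time `t` with probability at least
`n / (m + n + t n)`, and summing over `t` makes the mean return time to `m` infinite. -/

open Topology

lemma ENNReal.tsum_inv_natCast_add_one_eq_top : ∑' t : ℕ, ((t : ℝ≥0∞) + 1)⁻¹ = ⊤ := by
  by_contra h
  refine Real.not_summable_one_div_natCast ((summable_nat_add_iff 1).1 ?_)
  refine (ENNReal.summable_toReal h).congr fun t => ?_
  rw [ENNReal.toReal_inv]
  simp [one_div]
  norm_cast

lemma ENNReal.tsum_natCast_div_add_mul_eq_top {a : ℕ} (ha : a ≠ 0) (b d : ℕ) :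
    ∑' t : ℕ, (a : ℝ≥0∞) / ((b + t * d : ℕ) : ℝ≥0∞) = ⊤ := by
  have hle : ∀ t : ℕ, (a : ℝ≥0∞) / (b + d : ℕ) * ((t : ℝ≥0∞) + 1)⁻¹
      ≤ (a : ℝ≥0∞) / ((b + t * d : ℕ) : ℝ≥0∞) := fun t => by
    rw [div_eq_mul_inv, div_eq_mul_inv, mul_assoc, ← ENNReal.mul_inv (by simp) (by simp)]
    gcongr
    exact_mod_cast (show b + t * d ≤ (b + d) * (t + 1) by nlinarith)
  refine top_le_iff.1 ((ENNReal.tsum_le_tsum hle).trans' ?_)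
  rw [ENNReal.tsum_mul_left, ENNReal.tsum_inv_natCast_add_one_eq_top,
    ENNReal.mul_top (by simp [ENNReal.div_eq_zero_iff, ha])]

lemma ENNReal.sum_range_add_tsum_ite_lt (f : ℕ → ℝ≥0∞) (t : ℕ) :
    ∑ s ∈ Finset.range (t + 1), f s + ∑' s, (if t < s then f s else 0) = ∑' s, f s := by
  have htail := ENNReal.summable.sum_add_tsum_nat_add' (f := fun s => if t < s then f s else 0)
    (k := t + 1)
  rw [Finset.sum_eq_zero fun s hs => if_neg (by simp at hs; omega), zero_add] at htail
  simp only [show ∀ i, t < i + (t + 1) from fun i => by omega, if_true] at htail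
  rw [← htail]
  exact ENNReal.summable.sum_add_tsum_nat_add'

lemma ENNReal.tsum_tsum_ite_lt (f : ℕ → ℝ≥0∞) :
    ∑' t, ∑' s, (if t < s then f s else 0) = ∑' s : ℕ, (s : ℝ≥0∞) * f s := by
  rw [ENNReal.tsum_comm]
  refine tsum_congr fun s => ?_
  rw [tsum_eq_sum (s := Finset.range s) (fun t ht => if_neg (by simpa using ht)),
    Finset.sum_congr rfl (fun t ht => if_pos (Finset.mem_range.1 ht)), Finset.sum_const,
    Finset.card_range, nsmul_eq_mul]

lemma monotone_ofReal_log_one_add : Monotone fun x : ℕ => ENNReal.ofReal (Real.log (1 + x)) :=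
  fun x y hxy => ENNReal.ofReal_le_ofReal
    (Real.log_le_log (by positivity) (by gcongr))

lemma tendsto_ofReal_log_one_add :
    Tendsto (fun x : ℕ => ENNReal.ofReal (Real.log (1 + x))) atTop (𝓝 ⊤) :=
  ENNReal.tendsto_ofReal_atTop.comp (Real.tendsto_log_atTop.comp
    (tendsto_atTop_add_const_left _ 1 tendsto_natCast_atTop_atTop))

namespace MarkovChain

variable (M : MarkovChain)

open Classical in
/-- `M.stoppedExp S h t j` is `𝔼_j[h(X_{t ∧ τ})]`, where `τ` is the exit time from `S`. -/
noncomputable def stoppedExp (S : Set ℕ) (h : ℕ → ℝ≥0∞) : ℕ → ℕ → ℝ≥0∞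
  | 0, j => h j
  | t + 1, j => if j ∈ S then ∑' k, M.p j k * stoppedExp S h t k else h j

/-- The probability that the chain started at `j` stays in `S` at times `0, …, t`. -/
noncomputable def stayProb (S : Set ℕ) (t j : ℕ) : ℝ≥0∞ :=
  M.stoppedExp S (S.indicator 1) t j

noncomputable def stayForeverProb (S : Set ℕ) (j : ℕ) : ℝ≥0∞ :=
  ⨅ t, M.stayProb S t j

def UpwardBounded (d : ℕ) : Prop :=
  ∀ i j, i + d < j → M.p i j = 0

variable {M} {S : Set ℕ} {h h' : ℕ → ℝ≥0∞} {t j d : ℕ}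

lemma tsum_p_mul_le_one {f : ℕ → ℝ≥0∞} (hf : ∀ k, f k ≤ 1) (j : ℕ) :
    ∑' k, M.p j k * f k ≤ 1 :=
  calc ∑' k, M.p j k * f k ≤ ∑' k, M.p j k :=
        ENNReal.tsum_le_tsum fun k => mul_le_of_le_one_right' (hf k)
    _ = 1 := M.row_sum j

@[simp] lemma stoppedExp_zero : M.stoppedExp S h 0 j = h j := rfl

lemma stoppedExp_succ_of_mem (hj : j ∈ S) :
    M.stoppedExp S h (t + 1) j = ∑' k, M.p j k * M.stoppedExp S h t k := by
  simp [stoppedExp, hj]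

lemma stoppedExp_of_notMem (hj : j ∉ S) : ∀ t, M.stoppedExp S h t j = h j
  | 0 => rfl
  | _ + 1 => by simp [stoppedExp, hj]

lemma stoppedExp_mono (hh : h ≤ h') : ∀ t j, M.stoppedExp S h t j ≤ M.stoppedExp S h' t j
  | 0, j => hh j
  | t + 1, j => by
    by_cases hj : j ∈ S
    · simp only [stoppedExp_succ_of_mem hj]
      gcongr with k
      exact stoppedExp_mono hh t k
    · simp only [stoppedExp_of_notMem hj]
      exact hh j

lemma stoppedExp_add : ∀ t j,
    M.stoppedExp S (h + h') t j = M.stoppedExp S h t j + M.stoppedExp S h' t j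
  | 0, j => rfl
  | t + 1, j => by
    by_cases hj : j ∈ S
    · simp only [stoppedExp_succ_of_mem hj, stoppedExp_add t, mul_add, ENNReal.tsum_add]
    · simp only [stoppedExp_of_notMem hj, Pi.add_apply]

lemma stoppedExp_const_mul (c : ℝ≥0∞) : ∀ t j,
    M.stoppedExp S (fun k => c * h k) t j = c * M.stoppedExp S h t j
  | 0, j => rfl
  | t + 1, j => by
    by_cases hj : j ∈ S
    · simp only [stoppedExp_succ_of_mem hj, stoppedExp_const_mul c t, mul_left_comm _ c,
        ENNReal.tsum_mul_left]
    · simp only [stoppedExp_of_notMem hj]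

lemma stoppedExp_const (c : ℝ≥0∞) : ∀ t j, M.stoppedExp S (fun _ => c) t j = c
  | 0, j => rfl
  | t + 1, j => by
    by_cases hj : j ∈ S
    · simp only [stoppedExp_succ_of_mem hj, stoppedExp_const c t, ENNReal.tsum_mul_right,
        M.row_sum, one_mul]
    · simp only [stoppedExp_of_notMem hj]

lemma stoppedExp_time_add (s : ℕ) : ∀ t j,
    M.stoppedExp S h (t + s) j = M.stoppedExp S (M.stoppedExp S h s) t j
  | 0, j => by rw [zero_add, stoppedExp_zero]
  | t + 1, j => by
    by_cases hj : j ∈ S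
    · rw [add_right_comm, stoppedExp_succ_of_mem hj, stoppedExp_succ_of_mem hj]
      simp only [stoppedExp_time_add s t]
    · simp only [stoppedExp_of_notMem hj]

lemma stoppedExp_le_of_superharmonic (hh : ∀ j ∈ S, ∑' k, M.p j k * h k ≤ h j) :
    ∀ t j, M.stoppedExp S h t j ≤ h j
  | 0, j => le_rfl
  | t + 1, j => by
    by_cases hj : j ∈ S
    · rw [stoppedExp_succ_of_mem hj]
      refine le_trans ?_ (hh j hj)
      gcongr with k
      exact stoppedExp_le_of_superharmonic hh t k
    · rw [stoppedExp_of_notMem hj]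

lemma le_stoppedExp_of_subharmonic (hh : ∀ j ∈ S, h j ≤ ∑' k, M.p j k * h k) :
    ∀ t j, h j ≤ M.stoppedExp S h t j
  | 0, j => le_rfl
  | t + 1, j => by
    by_cases hj : j ∈ S
    · rw [stoppedExp_succ_of_mem hj]
      refine (hh j hj).trans ?_
      gcongr with k
      exact le_stoppedExp_of_subharmonic hh t k
    · rw [stoppedExp_of_notMem hj]

lemma stayProb_of_notMem (hj : j ∉ S) (t : ℕ) : M.stayProb S t j = 0 := by
  simp [stayProb, stoppedExp_of_notMem hj, hj]

lemma stayProb_succ_of_mem (hj : j ∈ S) :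
    M.stayProb S (t + 1) j = ∑' k, M.p j k * M.stayProb S t k :=
  stoppedExp_succ_of_mem hj

lemma stayProb_le_indicator (t j : ℕ) : M.stayProb S t j ≤ S.indicator 1 j := by
  refine stoppedExp_le_of_superharmonic (fun j hj => ?_) t j
  rw [Set.indicator_of_mem hj]
  exact tsum_p_mul_le_one (fun k => Set.indicator_le_self' (fun _ _ => zero_le_one) k) j

lemma stayProb_le_one (t j : ℕ) : M.stayProb S t j ≤ 1 :=
  (stayProb_le_indicator t j).trans (Set.indicator_le_self' (fun _ _ => zero_le_one) j)

lemma stayProb_time_add_le {s : ℕ} {c : ℝ≥0∞} (hc : ∀ k ∈ S, M.stayProb S s k ≤ c) (t j : ℕ) :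
    M.stayProb S (t + s) j ≤ c * M.stayProb S t j := by
  rw [stayProb, stoppedExp_time_add, stayProb, ← stoppedExp_const_mul]
  refine stoppedExp_mono (fun k => ?_) t j
  by_cases hk : k ∈ S
  · simpa [hk, stayProb] using hc k hk
  · simp [stoppedExp_of_notMem hk, hk]

lemma antitone_stayProb (S : Set ℕ) (j : ℕ) : Antitone fun t => M.stayProb S t j := by
  refine antitone_nat_of_succ_le fun t => ?_
  simpa using stayProb_time_add_le (s := 1) (fun k _ => stayProb_le_one 1 k) t j

lemma stayProb_mono_set {T : Set ℕ} (hST : S ⊆ T) : ∀ t j, M.stayProb S t j ≤ M.stayProb T t j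
  | 0, j => Set.indicator_le_indicator_of_subset hST (fun _ => zero_le) j
  | t + 1, j => by
    by_cases hj : j ∈ S
    · rw [stayProb_succ_of_mem hj, stayProb_succ_of_mem (hST hj)]
      gcongr with k
      exact stayProb_mono_set hST t k
    · simp [stayProb_of_notMem hj]

lemma stayProb_le_stoppedExp {B : Set ℕ} (hBS : B ⊆ S) :
    ∀ t j, M.stayProb S t j ≤ M.stoppedExp B (S.indicator 1) t j
  | 0, j => le_rfl
  | t + 1, j => by
    by_cases hj : j ∈ B
    · rw [stayProb_succ_of_mem (hBS hj), stoppedExp_succ_of_mem hj]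
      gcongr with k
      exact stayProb_le_stoppedExp hBS t k
    · rw [stoppedExp_of_notMem hj]
      exact stayProb_le_indicator _ _

lemma stayForeverProb_le (t : ℕ) : M.stayForeverProb S j ≤ M.stayProb S t j := iInf_le _ t

lemma tendsto_stayProb (S : Set ℕ) (j : ℕ) :
    Tendsto (fun t => M.stayProb S t j) atTop (𝓝 (M.stayForeverProb S j)) :=
  tendsto_atTop_iInf (antitone_stayProb S j)

lemma stayForeverProb_le_one : M.stayForeverProb S j ≤ 1 :=
  (stayForeverProb_le 0).trans (stayProb_le_one 0 j)

lemma stayForeverProb_of_notMem (hj : j ∉ S) : M.stayForeverProb S j = 0 :=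
  le_antisymm ((stayForeverProb_le 0).trans_eq (stayProb_of_notMem hj 0)) zero_le

/-- Interchanging `⨅` and `∑'` is monotone convergence for the counting measure, which needs the
rows of `M` to have finite mass. -/
lemma stayForeverProb_le_tsum (S : Set ℕ) (j : ℕ) :
    M.stayForeverProb S j ≤ ∑' k, M.p j k * M.stayForeverProb S k := by
  by_cases hj : j ∈ S
  swap
  · rw [stayForeverProb_of_notMem hj]
    exact zero_le
  have hinf : ∀ k, M.p j k * M.stayForeverProb S k = ⨅ t, M.p j k * M.stayProb S t k :=
    fun k => ENNReal.mul_iInf fun htop => absurd htop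
      (ne_top_of_le_ne_top ENNReal.one_ne_top (M.row_sum j ▸ ENNReal.le_tsum k))
  simp only [hinf, ← MeasureTheory.lintegral_count]
  rw [MeasureTheory.lintegral_iInf (f := fun t k => M.p j k * M.stayProb S t k)
    (fun _ => measurable_of_countable _)
    (fun s t hst k => mul_le_mul_right (antitone_stayProb S k hst) _)]
  · exact le_iInf fun t => (stayForeverProb_le (t + 1)).trans_eq
      (by rw [stayProb_succ_of_mem hj, MeasureTheory.lintegral_count])
  · rw [MeasureTheory.lintegral_count]
    exact ne_top_of_le_ne_top ENNReal.one_ne_top (tsum_p_mul_le_one (stayProb_le_one 0) j)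

lemma sum_range_hitAt_eq_stoppedExp (i : ℕ) : ∀ t j,
    ∑ s ∈ Finset.range (t + 1), M.hitAt i s j = M.stoppedExp {i}ᶜ (({i} : Set ℕ).indicator 1) t j
  | 0, j => by by_cases hj : j = i <;> simp [hitAt, hj]
  | t + 1, j => by
    rw [Finset.sum_range_succ']
    by_cases hj : j = i
    · subst hj
      simp [hitAt, stoppedExp_of_notMem]
    · rw [stoppedExp_succ_of_mem hj]
      simp only [hitAt, hj, if_false, add_zero, ← sum_range_hitAt_eq_stoppedExp i t,
        Finset.mul_sum]
      exact (Summable.tsum_finsetSum fun _ _ => ENNReal.summable).symm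

lemma stayProb_add_sum_range_hitAt (i t j : ℕ) :
    M.stayProb {i}ᶜ t j + ∑ s ∈ Finset.range (t + 1), M.hitAt i s j = 1 := by
  rw [sum_range_hitAt_eq_stoppedExp, stayProb, ← stoppedExp_add, Set.indicator_compl_add_self]
  exact stoppedExp_const 1 t j

lemma step_add_stayProb_le_one {x : ℕ} (hx : x ∉ S) :
    ∀ t k, M.step t k x + M.stayProb S t k ≤ 1
  | 0, k => by
    by_cases hk : k ∈ S
    · have : k ≠ x := fun h => hx (h ▸ hk)
      simp [step, stayProb, hk, this]
    · rw [stayProb_of_notMem hk, add_zero, step]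
      split_ifs <;> simp
  | t + 1, k => by
    have ih := step_add_stayProb_le_one hx t
    by_cases hk : k ∈ S
    · rw [step, stayProb_succ_of_mem hk, ← ENNReal.tsum_add]
      simp only [← mul_add]
      exact tsum_p_mul_le_one ih k
    · rw [stayProb_of_notMem hk, add_zero, step]
      exact tsum_p_mul_le_one (fun k' => le_of_add_le_left (ih k')) k

lemma stayProb_lt_one_of_step_pos {x t k : ℕ} (hx : x ∉ S) (hpos : 0 < M.step t k x) :
    M.stayProb S t k < 1 := by
  have h := step_add_stayProb_le_one (M := M) hx t k
  calc M.stayProb S t k ≤ 1 - M.step t k x :=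
        ENNReal.le_sub_of_add_le_left
          (ne_top_of_le_ne_top ENNReal.one_ne_top (le_of_add_le_left h)) h
    _ < 1 := ENNReal.sub_lt_self ENNReal.one_ne_top one_ne_zero hpos.ne'

/-- From each state of `B` the chain leaves `B` before a uniform time `T` with probability bounded
below, so the probability of staying in `B` decays geometrically. -/
lemma stayForeverProb_finset_eq_zero (hirr : M.Irreducible) (B : Finset ℕ) (j : ℕ) :
    M.stayForeverProb B j = 0 := by
  obtain ⟨x, hx⟩ := Infinite.exists_notMem_finset B
  choose τ hτ using fun k => hirr k x
  set T := B.sup τ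
  set c := B.sup fun k => M.stayProb B T k
  have hc : c < 1 := (Finset.sup_lt_iff zero_lt_one).2 fun k hk =>
    (antitone_stayProb _ k (Finset.le_sup hk)).trans_lt (stayProb_lt_one_of_step_pos hx (hτ k))
  have hdecay : ∀ u j, M.stayProb B (u * T) j ≤ c ^ u := by
    intro u
    induction u with
    | zero => exact fun j => by simpa using stayProb_le_one 0 j
    | succ u ih =>
      intro j
      rw [add_mul, one_mul, pow_succ']
      exact (stayProb_time_add_le (fun k hk => Finset.le_sup (f := fun k => M.stayProb B T k) hk)
        _ j).trans (mul_le_mul_right (ih j) c)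
  exact le_antisymm (ge_of_tendsto' (ENNReal.tendsto_pow_atTop_nhds_zero_of_lt_one hc)
    fun u => (stayForeverProb_le _).trans (hdecay u j)) zero_le

lemma stayForeverProb_compl_singleton_le_sup {N : ℕ}
    (hN : ∀ j, M.stayForeverProb (Set.Ioi N) j = 0) (i j : ℕ) :
    M.stayForeverProb {i}ᶜ j ≤ (Finset.range (N + 1)).sup (M.stayForeverProb {i}ᶜ) := by
  set γ := (Finset.range (N + 1)).sup (M.stayForeverProb {i}ᶜ)
  have hbound : M.stayForeverProb {i}ᶜ ≤ (Set.Ioi N).indicator 1 + fun _ => γ := fun k => by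
    by_cases hk : k ∈ Set.Ioi N
    · simpa [hk] using le_add_right (stayForeverProb_le_one (M := M))
    · exact le_add_left (Finset.le_sup (f := M.stayForeverProb {i}ᶜ)
        (Finset.mem_range.2 (by simp at hk; omega)))
  refine ge_of_tendsto' (((tendsto_stayProb (M := M) (Set.Ioi N) j).add_const γ).trans
    (by rw [hN, zero_add])) fun t => ?_
  calc M.stayForeverProb {i}ᶜ j
      ≤ M.stoppedExp (Set.Ioi N) (M.stayForeverProb {i}ᶜ) t j :=
        le_stoppedExp_of_subharmonic (fun k _ => stayForeverProb_le_tsum _ k) t j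
    _ ≤ M.stoppedExp (Set.Ioi N) ((Set.Ioi N).indicator 1 + fun _ => γ) t j :=
        stoppedExp_mono hbound t j
    _ = M.stayProb (Set.Ioi N) t j + γ := by rw [stoppedExp_add, stoppedExp_const]; rfl

/-- Maximum principle: the escape probability from `i` attains its supremum `γ` at some `a`, and
from `a` the chain hits `i` with positive probability, which forces `γ < γ` unless `γ = 0`. -/
lemma stayForeverProb_compl_singleton_eq_zero (hirr : M.Irreducible) {N : ℕ}
    (hN : ∀ j, M.stayForeverProb (Set.Ioi N) j = 0) (i j : ℕ) :
    M.stayForeverProb {i}ᶜ j = 0 := by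
  set g := M.stayForeverProb {i}ᶜ
  set γ := (Finset.range (N + 1)).sup g
  have hle : ∀ k, g k ≤ γ := stayForeverProb_compl_singleton_le_sup hN i
  suffices hγ : γ = 0 from le_antisymm ((hle j).trans_eq hγ) zero_le
  obtain ⟨a, -, ha⟩ := Finset.exists_mem_eq_sup _ Finset.nonempty_range_add_one g
  obtain ⟨t, ht⟩ := hirr a i
  have hbound : g ≤ fun k => γ * ({i}ᶜ : Set ℕ).indicator 1 k := fun k => by
    by_cases hk : k = i
    · simp [g, hk, stayForeverProb_of_notMem]
    · simpa [hk] using hle k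
  have hγa : γ ≤ γ * M.stayProb {i}ᶜ t a := calc
    γ = g a := ha
    _ ≤ M.stoppedExp {i}ᶜ g t a :=
        le_stoppedExp_of_subharmonic (fun k _ => stayForeverProb_le_tsum _ k) t a
    _ ≤ γ * M.stayProb {i}ᶜ t a :=
        (stoppedExp_mono hbound t a).trans_eq (stoppedExp_const_mul γ t a)
  by_contra hγ0
  have hγtop : γ ≠ ⊤ := ne_top_of_le_ne_top ENNReal.one_ne_top
    (Finset.sup_le fun k _ => stayForeverProb_le_one)
  have := hγa.trans_lt <| mul_comm γ _ ▸ ENNReal.mul_lt_mul_left hγ0 hγtop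
    (stayProb_lt_one_of_step_pos (by simp) ht)
  exact (this.trans_eq (one_mul γ)).false

lemma tsum_hitAt_eq_one {i j : ℕ} (h : M.stayForeverProb {i}ᶜ j = 0) :
    ∑' s, M.hitAt i s j = 1 := by
  have hsum := ((tendsto_stayProb (M := M) {i}ᶜ j).add
    ((ENNReal.tendsto_nat_tsum fun s => M.hitAt i s j).comp (tendsto_add_atTop_nat 1)))
  simp only [Function.comp_def, stayProb_add_sum_range_hitAt, h, zero_add] at hsum
  exact tendsto_nhds_unique hsum tendsto_const_nhds

lemma recurrent_of_stayForeverProb_eq_zero (h : ∀ i j, M.stayForeverProb {i}ᶜ j = 0) :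
    M.Recurrent := fun i => by
  simp only [firstReturn]
  rw [ENNReal.tsum_comm]
  simp only [ENNReal.tsum_mul_left, tsum_hitAt_eq_one (h i _), mul_one]
  exact M.row_sum i

/-- Optional stopping for the superharmonic `V` on the band `(N, R]`: the chain leaves the band
above `R`, where `V ≥ V (R + 1)`, with probability at most `V j / V (R + 1)`. -/
lemma mul_stayForeverProb_Ioi_le (hirr : M.Irreducible) {N : ℕ} {V : ℕ → ℝ≥0∞}
    (hV : ∀ j > N, ∑' k, M.p j k * V k ≤ V j) (hmono : Monotone V) (hfin : ∀ j, V j ≠ ⊤)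
    (R j : ℕ) : V (R + 1) * M.stayForeverProb (Set.Ioi N) j ≤ V j := by
  have hB : M.stayForeverProb (Set.Ioc N R) j = 0 := by
    simpa using stayForeverProb_finset_eq_zero hirr (Finset.Ioc N R) j
  have hbound : (fun k => V (R + 1) * (Set.Ioi N).indicator 1 k)
      ≤ (fun k => V (R + 1) * (Set.Ioc N R).indicator 1 k) + V := fun k => by
    by_cases hk : k ∈ Set.Ioc N R
    · simp [hk, Set.Ioc_subset_Ioi_self hk]
    · by_cases hkN : k ∈ Set.Ioi N
      · simp only [Set.indicator_of_mem hkN, Pi.one_apply, mul_one, Pi.add_apply]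
        exact le_add_left (hmono (by simp_all))
      · simp [hkN]
  have hlim :
      Tendsto (fun t => V (R + 1) * M.stayProb (Set.Ioc N R) t j + V j) atTop (𝓝 (V j)) := by
    simpa [hB] using ((ENNReal.Tendsto.const_mul (tendsto_stayProb (M := M) (Set.Ioc N R) j)
      (Or.inr (hfin (R + 1)))).add_const (V j))
  refine ge_of_tendsto' hlim fun t => ?_
  calc V (R + 1) * M.stayForeverProb (Set.Ioi N) j
      ≤ V (R + 1) * M.stoppedExp (Set.Ioc N R) ((Set.Ioi N).indicator 1) t j :=
        mul_le_mul_right ((stayForeverProb_le t).trans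
          (stayProb_le_stoppedExp Set.Ioc_subset_Ioi_self t j)) _
    _ ≤ M.stoppedExp (Set.Ioc N R)
          ((fun k => V (R + 1) * (Set.Ioc N R).indicator 1 k) + V) t j := by
        rw [← stoppedExp_const_mul]
        exact stoppedExp_mono hbound t j
    _ ≤ V (R + 1) * M.stayProb (Set.Ioc N R) t j + V j := by
        rw [stoppedExp_add, stoppedExp_const_mul]
        exact add_le_add_right (stoppedExp_le_of_superharmonic
          (fun k hk => hV k (Set.Ioc_subset_Ioi_self hk)) t j) _

lemma stayForeverProb_Ioi_eq_zero_of_lyapunov (hirr : M.Irreducible) {N : ℕ} {V : ℕ → ℝ≥0∞}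
    (hV : ∀ j > N, ∑' k, M.p j k * V k ≤ V j) (hmono : Monotone V) (hfin : ∀ j, V j ≠ ⊤)
    (hlim : Tendsto V atTop (𝓝 ⊤)) (j : ℕ) : M.stayForeverProb (Set.Ioi N) j = 0 := by
  by_contra h
  have hlim' : Tendsto (fun R => V (R + 1) * M.stayForeverProb (Set.Ioi N) j) atTop (𝓝 ⊤) := by
    simpa [ENNReal.top_mul h] using ENNReal.Tendsto.mul_const (b := M.stayForeverProb (Set.Ioi N) j)
      (hlim.comp (tendsto_add_atTop_nat 1)) (Or.inl ENNReal.top_ne_zero)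
  exact hfin j (top_le_iff.1 (le_of_tendsto' hlim'
    (mul_stayForeverProb_Ioi_le hirr hV hmono hfin · j)))

theorem recurrent_of_lyapunov (hirr : M.Irreducible) {N : ℕ} {V : ℕ → ℝ≥0∞}
    (hV : ∀ j > N, ∑' k, M.p j k * V k ≤ V j) (hmono : Monotone V) (hfin : ∀ j, V j ≠ ⊤)
    (hlim : Tendsto V atTop (𝓝 ⊤)) : M.Recurrent :=
  recurrent_of_stayForeverProb_eq_zero fun i =>
    stayForeverProb_compl_singleton_eq_zero hirr
      (stayForeverProb_Ioi_eq_zero_of_lyapunov hirr hV hmono hfin hlim) i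

/-- Before leaving `(i, ∞)` the chain is below `j + t d`, and it leaves by landing in `[0, i]`. -/
lemma stoppedExp_natCast_Ioi_le (hup : M.UpwardBounded d) (i : ℕ) : ∀ t j,
    M.stoppedExp (Set.Ioi i) (↑) t j ≤ i + ((j + t * d : ℕ) : ℝ≥0∞) * M.stayProb (Set.Ioi i) t j
  | 0, j => by
    by_cases hj : j ∈ Set.Ioi i
    · simp [stayProb, hj]
    · simp only [Set.mem_Ioi, not_lt] at hj
      exact le_add_right (Nat.cast_le.2 hj)
  | t + 1, j => by
    by_cases hj : j ∈ Set.Ioi i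
    · rw [stoppedExp_succ_of_mem hj, stayProb_succ_of_mem hj, ← ENNReal.tsum_mul_left]
      calc ∑' k, M.p j k * M.stoppedExp (Set.Ioi i) (↑) t k
          ≤ ∑' k, M.p j k * (i + ((j + (t + 1) * d : ℕ) : ℝ≥0∞) * M.stayProb (Set.Ioi i) t k) := by
            refine ENNReal.tsum_le_tsum fun k => ?_
            by_cases hk : k ≤ j + d
            · refine mul_le_mul_right ((stoppedExp_natCast_Ioi_le hup i t k).trans ?_) _
              exact add_le_add_right (mul_le_mul_of_nonneg_right (Nat.cast_le.2 (by nlinarith))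
                zero_le) _
            · simp [hup j k (by omega)]
        _ = (i : ℝ≥0∞) * ∑' k, M.p j k
            + ∑' k, ((j + (t + 1) * d : ℕ) : ℝ≥0∞) * (M.p j k * M.stayProb (Set.Ioi i) t k) := by
            rw [← ENNReal.tsum_mul_left, ← ENNReal.tsum_add]
            exact tsum_congr fun k => by ring
        _ = _ := by rw [M.row_sum, mul_one]
    · rw [stoppedExp_of_notMem hj]
      simp only [Set.mem_Ioi, not_lt] at hj
      exact le_add_right (Nat.cast_le.2 hj)

/-- Optional stopping for the submartingale `X_t`. -/
lemma natCast_sub_div_le_stayProb_Ioi (hup : M.UpwardBounded d) {i j : ℕ}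
    (hsub : ∀ j > i, (j : ℝ≥0∞) ≤ ∑' k, M.p j k * k) (hij : i < j) (t : ℕ) :
    ((j - i : ℕ) : ℝ≥0∞) / ((j + t * d : ℕ) : ℝ≥0∞) ≤ M.stayProb (Set.Ioi i) t j := by
  refine ENNReal.div_le_of_le_mul' ?_
  have h := (le_stoppedExp_of_subharmonic (h := fun k : ℕ => (k : ℝ≥0∞)) hsub t j).trans
    (stoppedExp_natCast_Ioi_le hup i t j)
  rw [show (j : ℝ≥0∞) = ((j - i : ℕ) : ℝ≥0∞) + i by norm_cast; omega, add_comm (i : ℝ≥0∞)] at h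
  exact (ENNReal.add_le_add_iff_right (ENNReal.natCast_ne_top i)).1 h

lemma sum_range_firstReturn_add_tsum_stayProb (i t : ℕ) :
    ∑ s ∈ Finset.range (t + 1), M.firstReturn i s + ∑' k, M.p i k * M.stayProb {i}ᶜ t k = 1 := by
  simp only [firstReturn]
  rw [← Summable.tsum_finsetSum fun _ _ => ENNReal.summable, ← ENNReal.tsum_add]
  simp only [← Finset.mul_sum, ← mul_add, add_comm (∑ s ∈ _, _), stayProb_add_sum_range_hitAt,
    mul_one]
  exact M.row_sum i

/-- `∑_t P(T > t + 1) ≤ 𝔼 T` for the return time `T` to a recurrent state `i`. -/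
lemma tsum_stayProb_le_tsum_mul_firstReturn {i : ℕ} (hrec : ∑' s, M.firstReturn i s = 1) :
    ∑' t, ∑' k, M.p i k * M.stayProb {i}ᶜ t k ≤ ∑' t : ℕ, ((t : ℝ≥0∞) + 1) * M.firstReturn i t := by
  have htail : ∀ t, ∑' k, M.p i k * M.stayProb {i}ᶜ t k
      = ∑' s, (if t < s then M.firstReturn i s else 0) := fun t => by
    have h := (sum_range_firstReturn_add_tsum_stayProb (M := M) i t).trans
      ((ENNReal.sum_range_add_tsum_ite_lt _ t).trans hrec).symm
    exact (ENNReal.add_right_inj (ENNReal.sum_ne_top.2 fun s _ =>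
      ne_top_of_le_ne_top ENNReal.one_ne_top (hrec ▸ ENNReal.le_tsum s))).1 h
  simp only [htail, ENNReal.tsum_tsum_ite_lt]
  exact ENNReal.tsum_le_tsum fun t => mul_le_mul_left le_self_add _

/-- Started at `k > i`, the chain stays above `i` up to time `t` with probability of order
`1 / t`, which is not summable. -/
theorem tsum_succ_mul_firstReturn_eq_top {i k : ℕ} (hrec : ∑' s, M.firstReturn i s = 1)
    (hup : M.UpwardBounded d) (hsub : ∀ j > i, (j : ℝ≥0∞) ≤ ∑' k, M.p j k * k) (hik : i < k)
    (hpik : M.p i k ≠ 0) : ∑' t : ℕ, ((t : ℝ≥0∞) + 1) * M.firstReturn i t = ⊤ := by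
  refine top_le_iff.1 (le_trans ?_ (tsum_stayProb_le_tsum_mul_firstReturn hrec))
  calc (⊤ : ℝ≥0∞)
      = M.p i k * ∑' t : ℕ, ((k - i : ℕ) : ℝ≥0∞) / ((k + t * d : ℕ) : ℝ≥0∞) := by
        rw [ENNReal.tsum_natCast_div_add_mul_eq_top (by omega), ENNReal.mul_top hpik]
    _ ≤ ∑' t, M.p i k * M.stayProb {i}ᶜ t k := by
        rw [← ENNReal.tsum_mul_left]
        refine ENNReal.tsum_le_tsum fun t => mul_le_mul_right ?_ _
        exact (natCast_sub_div_le_stayProb_Ioi hup hsub hik t).trans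
          (stayProb_mono_set (fun x hx => ne_of_gt hx) t k)
    _ ≤ ∑' t, ∑' k', M.p i k' * M.stayProb {i}ᶜ t k' :=
        ENNReal.tsum_le_tsum fun t => ENNReal.le_tsum (f := fun k' => M.p i k' * _) k

theorem nullRecurrent_of_lyapunov_of_drift_nonneg (hirr : M.Irreducible) {N : ℕ}
    {V : ℕ → ℝ≥0∞} (hV : ∀ j > N, ∑' k, M.p j k * V k ≤ V j) (hmono : Monotone V)
    (hfin : ∀ j, V j ≠ ⊤) (hlim : Tendsto V atTop (𝓝 ⊤)) (hup : M.UpwardBounded d) {i k : ℕ}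
    (hsub : ∀ j > i, (j : ℝ≥0∞) ≤ ∑' k, M.p j k * k) (hik : i < k) (hpik : M.p i k ≠ 0) :
    M.NullRecurrent :=
  have hrec := recurrent_of_lyapunov hirr hV hmono hfin hlim
  ⟨hrec, fun hpos => (hpos.2 i).ne (tsum_succ_mul_firstReturn_eq_top (hrec i) hup hsub hik hpik)⟩

end MarkovChain

namespace UpDownWalk

def downStep (m i : ℕ) : ℕ := if i < m then i else i - m

noncomputable def kernel (m n i j : ℕ) : ℝ≥0∞ :=
  if j = i + n then (m : ℝ≥0∞) / (m + n) else if j = downStep m i then (n : ℝ≥0∞) / (m + n) else 0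

variable {M : MarkovChain} {m n : ℕ}

lemma downStep_le (i : ℕ) : downStep m i ≤ i := by
  unfold downStep; split_ifs <;> omega

lemma tsum_kernel_mul (hn : 0 < n) (i : ℕ) (f : ℕ → ℝ≥0∞) :
    ∑' j, kernel m n i j * f j
      = (m : ℝ≥0∞) / (m + n) * f (i + n) + (n : ℝ≥0∞) / (m + n) * f (downStep m i) := by
  have hne : downStep m i ≠ i + n := ((downStep_le i).trans_lt (by omega)).ne
  have hsplit : ∀ j, kernel m n i j * f j
      = (if j = i + n then (m : ℝ≥0∞) / (m + n) * f j else 0)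
        + (if j = downStep m i then (n : ℝ≥0∞) / (m + n) * f j else 0) := fun j => by
    unfold kernel
    by_cases h1 : j = i + n
    · simp [h1, hne.symm]
    · by_cases h2 : j = downStep m i <;> simp [h1, h2, hne]
  simp only [hsplit]
  rw [ENNReal.tsum_add, tsum_ite_eq, tsum_ite_eq]

lemma tsum_kernel_mul_of_le (hn : 0 < n) {i : ℕ} (hi : m ≤ i) (f : ℕ → ℝ≥0∞) :
    ∑' j, kernel m n i j * f j
      = (m : ℝ≥0∞) / (m + n) * f (i + n) + (n : ℝ≥0∞) / (m + n) * f (i - m) := by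
  rw [tsum_kernel_mul hn, downStep, if_neg (by omega)]

lemma upwardBounded (hp : M.p = kernel m n) : M.UpwardBounded n := fun i j hij => by
  have : j ≠ downStep m i := ((downStep_le i).trans_lt (by omega)).ne'
  simp [hp, kernel, this, hij.ne']

lemma natCast_div_add_eq_ofReal (a : ℕ) (hmn : 0 < m + n) :
    (a : ℝ≥0∞) / (m + n) = ENNReal.ofReal (a / (m + n)) := by
  rw [ENNReal.ofReal_div_of_pos (by exact_mod_cast hmn), ENNReal.ofReal_add (by positivity)
    (by positivity)]
  simp only [ENNReal.ofReal_natCast]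

/-- Concavity of `log`, as the mean jump is zero above `m`. -/
lemma kernel_log_superharmonic (hn : 0 < n) {i : ℕ} (hi : m ≤ i) :
    ∑' j, kernel m n i j * ENNReal.ofReal (Real.log (1 + j))
      ≤ ENNReal.ofReal (Real.log (1 + i)) := by
  have hlog : ∀ x : ℕ, 0 ≤ Real.log (1 + x) :=
    fun x => Real.log_nonneg (le_add_of_nonneg_right (Nat.cast_nonneg x))
  rw [tsum_kernel_mul_of_le hn hi, natCast_div_add_eq_ofReal m (by omega),
    natCast_div_add_eq_ofReal n (by omega), ← ENNReal.ofReal_mul (by positivity),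
    ← ENNReal.ofReal_mul (by positivity), ← ENNReal.ofReal_add
      (mul_nonneg (by positivity) (hlog _)) (mul_nonneg (by positivity) (hlog _))]
  have hconc := strictConcaveOn_log_Ioi.concaveOn.2 (x := 1 + ((i + n : ℕ) : ℝ))
    (y := 1 + ((i - m : ℕ) : ℝ)) (Set.mem_Ioi.2 (by positivity)) (Set.mem_Ioi.2 (by positivity))
    (by positivity : (0 : ℝ) ≤ m / (m + n)) (by positivity : (0 : ℝ) ≤ n / (m + n)) (by field_simp)
  simp only [smul_eq_mul] at hconc
  refine ENNReal.ofReal_le_ofReal (hconc.trans_eq ?_)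
  congr 1
  rw [Nat.cast_sub hi]
  field_simp
  push_cast
  ring

lemma kernel_natCast_harmonic (hn : 0 < n) {i : ℕ} (hi : m ≤ i) :
    ∑' j, kernel m n i j * (j : ℝ≥0∞) = i := by
  rw [tsum_kernel_mul_of_le hn hi, natCast_div_add_eq_ofReal m (by omega),
    natCast_div_add_eq_ofReal n (by omega), ← ENNReal.ofReal_natCast, ← ENNReal.ofReal_natCast,
    ← ENNReal.ofReal_mul (by positivity), ← ENNReal.ofReal_mul (by positivity),
    ← ENNReal.ofReal_add (by positivity) (by positivity), ← ENNReal.ofReal_natCast i]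
  congr 1
  rw [Nat.cast_sub hi]
  field_simp
  push_cast
  ring

end UpDownWalk

theorem stmt6_general (M : MarkovChain) (m n : ℕ) (hm : 0 < m) (hn : 0 < n)
    (hirr : M.Irreducible)
    (h_hi : ∀ i j : ℕ, m ≤ i →
      M.p i j = if j = i + n then (m : ℝ≥0∞) / ((m : ℝ≥0∞) + n)
        else if j = i - m then (n : ℝ≥0∞) / ((m : ℝ≥0∞) + n) else 0)
    (h_lo : ∀ i j : ℕ, i < m →
      M.p i j = if j = i + n then (m : ℝ≥0∞) / ((m : ℝ≥0∞) + n)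
        else if j = i then (n : ℝ≥0∞) / ((m : ℝ≥0∞) + n) else 0) :
    M.NullRecurrent := by
  have hp : M.p = UpDownWalk.kernel m n := by
    ext i j
    by_cases hi : i < m
    · simp [h_lo i j hi, UpDownWalk.kernel, UpDownWalk.downStep, hi]
    · simp [h_hi i j (not_lt.1 hi), UpDownWalk.kernel, UpDownWalk.downStep, hi]
  refine M.nullRecurrent_of_lyapunov_of_drift_nonneg hirr (N := m)
    (fun j hj => hp ▸ UpDownWalk.kernel_log_superharmonic hn hj.le) monotone_ofReal_log_one_add
    (fun _ => ENNReal.ofReal_ne_top) tendsto_ofReal_log_one_add (UpDownWalk.upwardBounded hp)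
    (fun j hj => (hp ▸ UpDownWalk.kernel_natCast_harmonic hn hj.le).ge)
    (show m < m + n by omega) ?_
  simp [hp, UpDownWalk.kernel, ENNReal.div_eq_zero_iff, hm.ne']

/-- for coprime positive `m, n`, the chain moving up by `n` with
probability `m/(m+n)` and down by `m` (or staying put near the boundary) with
probability `n/(m+n)` is null recurrent. -/
theorem stmt6 (M : MarkovChain) (m n : ℕ) (hm : 0 < m) (hn : 0 < n)
    (hcop : Nat.Coprime m n)
    (hirr : M.Irreducible)
    (h_hi : ∀ i j : ℕ, m ≤ i →
      M.p i j = if j = i + n then (m : ℝ≥0∞) / ((m : ℝ≥0∞) + n)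
        else if j = i - m then (n : ℝ≥0∞) / ((m : ℝ≥0∞) + n) else 0)
    (h_lo : ∀ i j : ℕ, i < m →
      M.p i j = if j = i + n then (m : ℝ≥0∞) / ((m : ℝ≥0∞) + n)
        else if j = i then (n : ℝ≥0∞) / ((m : ℝ≥0∞) + n) else 0) :
    M.NullRecurrent :=
  stmt6_general M m n hm hn hirr h_hi h_lo
end

section
/- Suppose gamma_i = C i^{-alpha}(1 + epsilon_i) for constants C > 0 and alpha in (1/2, 1), where max_{|h| <= d} |epsilon_{i+h}| = O(1/i), and (gamma_i) is eventually positive and non-increasing. Then sum_i gamma_i^2 < infinity and there exists N such that for all i >= N, d * max_{|k-i| <= d} |gamma_k^2 - gamma_i^2| <= (1/2) gamma_i^3; consequently a uniformly bounded (with bound d) irreducible chain with these mean drifts is transient. -/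
/-! Because `ε_i = O(1/i)`, `γ_i ~ C i^{-α}`: hence `∑ γ_i²` converges (`2α > 1`), and across a
window of width `d` the squares `γ_k²` differ from `γ_i²` by `O(i^{-2α-1}) = o(i^{-3α}) = o(γ_i³)`
(`α < 1`), which is the drift criterion.

For transience, the tail `f(x) = ∑_{j>x} γ_j²` is superharmonic far out: a jump from `x` to `k`
changes `f` by `-(k-x) γ_x²` up to `d δ_x`, so the expected change is at most
`-γ_x³ + d δ_x ≤ -γ_x³/2`. Rescaled and capped at `1`, `f` majorises the probability of ever
hitting a given state `i` while being `< 1` at some state; irreducibility then carries this back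
to a return probability `< 1` at `i`. -/

open scoped ENNReal BigOperators
open Filter

theorem ENNReal.tsum_mul_lt_one {p q : ℕ → ℝ≥0∞} (hp : ∑' k, p k = 1) (hq : ∀ k, q k ≤ 1)
    {k : ℕ} (hpk : p k ≠ 0) (hqk : q k < 1) : ∑' j, p j * q j < 1 := by
  have hle : ∀ j, p j * q j ≤ p j := fun j => mul_le_of_le_one_right' (hq j)
  have hpk_top : p k ≠ ⊤ := ne_top_of_le_ne_top ENNReal.one_ne_top (hp ▸ ENNReal.le_tsum k)
  calc ∑' j, p j * q j < ∑' j, p j := by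
        refine ENNReal.tsum_lt_tsum (i := k)
          (ne_top_of_le_ne_top (by simp [hp]) (ENNReal.tsum_le_tsum hle)) hle ?_
        simpa using (ENNReal.mul_lt_mul_iff_right hpk hpk_top).2 hqk
    _ = 1 := hp

namespace MarkovChain

variable (M : MarkovChain)

theorem p_ne_top_s10 (x k : ℕ) : M.p x k ≠ ⊤ :=
  ne_top_of_le_ne_top ENNReal.one_ne_top (M.row_sum x ▸ ENNReal.le_tsum k)

noncomputable def hitProb (i x : ℕ) : ℝ≥0∞ := ∑' n, M.hitAt i n x

variable {M}

theorem hitProb_le {i : ℕ} {G : ℕ → ℝ≥0∞} (hGi : 1 ≤ G i)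
    (hG : ∀ x, x ≠ i → ∑' k, M.p x k * G k ≤ G x) (x : ℕ) : M.hitProb i x ≤ G x := by
  suffices h : ∀ n x, ∑ m ∈ Finset.range n, M.hitAt i m x ≤ G x from
    ENNReal.tsum_le_of_sum_range_le fun n => h n x
  intro n
  induction n with
  | zero => simp
  | succ n ih =>
    intro x
    rw [Finset.sum_range_succ']
    by_cases hx : x = i
    · subst hx
      simpa [hitAt] using hGi
    · calc ∑ m ∈ Finset.range n, M.hitAt i (m + 1) x + M.hitAt i 0 x
          = ∑' k, M.p x k * ∑ m ∈ Finset.range n, M.hitAt i m k := by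
            simp only [hitAt, hx, if_false, add_zero, Finset.mul_sum]
            exact (Summable.tsum_finsetSum fun _ _ => ENNReal.summable).symm
        _ ≤ ∑' k, M.p x k * G k := ENNReal.tsum_le_tsum fun k => mul_le_mul_right (ih k) _
        _ ≤ G x := hG x hx

theorem hitProb_le_one (i x : ℕ) : M.hitProb i x ≤ 1 :=
  hitProb_le (G := fun _ => 1) le_rfl (fun y _ => by simp [M.row_sum y]) x

theorem hitProb_self (i : ℕ) : M.hitProb i i = 1 := by
  rw [hitProb, tsum_eq_single 0 fun n hn => ?_]
  · simp [hitAt]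
  · obtain ⟨n, rfl⟩ := Nat.exists_eq_succ_of_ne_zero hn
    simp [hitAt]

theorem hitProb_eq_tsum {i x : ℕ} (hx : x ≠ i) :
    M.hitProb i x = ∑' k, M.p x k * M.hitProb i k := by
  rw [hitProb, tsum_eq_zero_add' ENNReal.summable]
  simp only [hitAt, hx, if_false, zero_add, hitProb, ← ENNReal.tsum_mul_left]
  exact ENNReal.tsum_comm

theorem tsum_firstReturn (i : ℕ) :
    ∑' n, M.firstReturn i n = ∑' k, M.p i k * M.hitProb i k := by
  simp only [firstReturn, hitProb, ← ENNReal.tsum_mul_left]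
  exact ENNReal.tsum_comm

theorem tsum_mul_hitProb_lt_one {i x k : ℕ} (hk : M.p x k ≠ 0) (hk1 : M.hitProb i k < 1) :
    ∑' j, M.p x j * M.hitProb i j < 1 :=
  ENNReal.tsum_mul_lt_one (M.row_sum x) (hitProb_le_one i) hk hk1

-- The second alternative, the return probability to `i`, absorbs paths through `i`, where
-- `hitProb i i = 1` cannot propagate the bound.
theorem hitProb_lt_one_or_of_step_pos {i m : ℕ} (hm : M.hitProb i m < 1) (n : ℕ) :
    ∀ x, 0 < M.step n x m →
      M.hitProb i x < 1 ∨ ∑' k, M.p i k * M.hitProb i k < 1 := by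
  induction n with
  | zero =>
    intro x hx
    obtain rfl : x = m := by by_contra h; simp [step, h] at hx
    exact Or.inl hm
  | succ n ih =>
    intro x hx
    obtain ⟨k, hk⟩ : ∃ k, M.p x k * M.step n k m ≠ 0 := by
      by_contra! h
      simp [step, ENNReal.tsum_eq_zero.2 h] at hx
    obtain ⟨hxk, hkm⟩ := mul_ne_zero_iff.1 hk
    rcases ih k (pos_iff_ne_zero.2 hkm) with hk1 | hreturn
    · by_cases hxi : x = i
      · subst hxi
        exact Or.inr (tsum_mul_hitProb_lt_one hxk hk1)
      · exact Or.inl (hitProb_eq_tsum hxi ▸ tsum_mul_hitProb_lt_one hxk hk1)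
    · exact Or.inr hreturn

theorem transient_of_hitProb_lt_one (hirr : M.Irreducible) (h : ∀ i, ∃ m, M.hitProb i m < 1) :
    M.Transient := by
  intro i
  obtain ⟨m, hm⟩ := h i
  obtain ⟨n, hn⟩ := hirr i m
  rw [tsum_firstReturn]
  refine (hitProb_lt_one_or_of_step_pos hm n i hn).resolve_left ?_
  simp [hitProb_self]

theorem transient_of_superharmonic (hirr : M.Irreducible) {f : ℕ → ℝ} {N : ℕ}
    (hf0 : ∀ x, 0 ≤ f x) (hanti : Antitone f) (hdrop : ∀ x, N ≤ x → f (x + 1) < f x)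
    (hsuper : ∀ x, N ≤ x →
      ∑' k, M.p x k * ENNReal.ofReal (f k) ≤ ENNReal.ofReal (f x)) :
    M.Transient := by
  refine transient_of_hitProb_lt_one hirr fun i => ?_
  set n := max N i
  have hc : 0 < f n := (hf0 _).trans_lt (hdrop n (le_max_left _ _))
  set G : ℕ → ℝ≥0∞ := fun k => min 1 (ENNReal.ofReal (f k / f n))
  have hG_le : ∀ k, G k ≤ 1 := fun k => min_le_left _ _
  have hG_eq : ∀ x, x ≤ n → G x = 1 := fun x hx =>
    min_eq_left (ENNReal.one_le_ofReal.2 ((one_le_div hc).2 (hanti hx)))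
  refine ⟨n + 1,
    (hitProb_le (G := G) (hG_eq i (le_max_right _ _)).ge (fun x _ => ?_) _).trans_lt ?_⟩
  · have hone : ∑' k, M.p x k * G k ≤ 1 :=
      (ENNReal.tsum_le_tsum fun k => mul_le_of_le_one_right' (hG_le k)).trans (M.row_sum x).le
    rcases le_or_gt x n with hx | hx
    · exact (hG_eq x hx).symm ▸ hone
    refine le_min hone ?_
    calc ∑' k, M.p x k * G k ≤ ∑' k, M.p x k * ENNReal.ofReal (f k) * ENNReal.ofReal (f n)⁻¹ := by
          refine ENNReal.tsum_le_tsum fun k => ?_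
          rw [mul_assoc, ← ENNReal.ofReal_mul (hf0 k)]
          exact mul_le_mul_right (min_le_right _ _) _
      _ ≤ ENNReal.ofReal (f x) * ENNReal.ofReal (f n)⁻¹ := by
          rw [ENNReal.tsum_mul_right]
          exact mul_le_mul_left (hsuper x (by omega)) _
      _ = ENNReal.ofReal (f x / f n) := (ENNReal.ofReal_mul (hf0 x)).symm
  · exact min_lt_of_right_lt
      (ENNReal.ofReal_lt_one.2 ((div_lt_one hc).2 (hdrop n (le_max_left _ _))))

end MarkovChain

namespace MarkovChain.UniformlyBounded

variable {M : MarkovChain} {d : ℕ}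

theorem p_eq_zero (hub : M.UniformlyBounded d) {x j : ℕ} (hj : j ∉ Finset.Icc (x - d) (x + d)) :
    M.p x j = 0 := by
  rw [Finset.mem_Icc] at hj
  exact hub x j (lt_abs.2 (by omega))

theorem sum_toReal_p (hub : M.UniformlyBounded d) (x : ℕ) :
    ∑ k ∈ Finset.Icc (x - d) (x + d), (M.p x k).toReal = 1 := by
  rw [← ENNReal.toReal_sum fun k _ => M.p_ne_top_s10 x k,
    ← tsum_eq_sum (L := SummationFilter.unconditional ℕ) fun j hj => hub.p_eq_zero hj,
    M.row_sum x, ENNReal.toReal_one]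

theorem drift_eq_sum (hub : M.UniformlyBounded d) (x : ℕ) :
    M.drift x = ∑ k ∈ Finset.Icc (x - d) (x + d), (M.p x k).toReal * ((k : ℝ) - x) :=
  tsum_eq_sum (s := Finset.Icc (x - d) (x + d)) fun j hj => by simp [hub.p_eq_zero hj]

theorem tsum_mul_ofReal (hub : M.UniformlyBounded d) {f : ℕ → ℝ} (hf : ∀ k, 0 ≤ f k) (x : ℕ) :
    ∑' k, M.p x k * ENNReal.ofReal (f k)
      = ENNReal.ofReal (∑ k ∈ Finset.Icc (x - d) (x + d), (M.p x k).toReal * f k) := by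
  rw [tsum_eq_sum (s := Finset.Icc (x - d) (x + d)) fun j hj => by simp [hub.p_eq_zero hj],
    ENNReal.ofReal_sum_of_nonneg fun k _ => mul_nonneg ENNReal.toReal_nonneg (hf k)]
  refine Finset.sum_congr rfl fun k _ => ?_
  rw [ENNReal.ofReal_mul ENNReal.toReal_nonneg, ENNReal.ofReal_toReal (M.p_ne_top_s10 x k)]

end MarkovChain.UniformlyBounded

noncomputable def tailSum (a : ℕ → ℝ) (x : ℕ) : ℝ := ∑' j, a (j + (x + 1))

-- `localOsc (fun k => γ k ^ 2) d i` is the paper's `δ_i`; the window `Icc (i - d) (i + d)` is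
-- truncated at `0`.
noncomputable def localOsc (a : ℕ → ℝ) (d x : ℕ) : ℝ :=
  (Finset.Icc (x - d) (x + d)).sup' ⟨x, Finset.mem_Icc.2 ⟨Nat.sub_le x d, Nat.le_add_right x d⟩⟩
    fun k => |a k - a x|

section TailSum

variable {a : ℕ → ℝ}

theorem tailSum_sub_tailSum (ha : Summable a) {x k : ℕ} (h : x ≤ k) :
    tailSum a x - tailSum a k = ∑ t ∈ Finset.Ioc x k, a t := by
  have hx := ha.sum_add_tsum_nat_add (x + 1)
  have hk := ha.sum_add_tsum_nat_add (k + 1)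
  rw [tailSum, tailSum, ← Finset.Ico_add_one_add_one_eq_Ioc, Finset.sum_Ico_eq_sub _ (by omega)]
  linarith

theorem tailSum_nonneg (ha0 : ∀ t, 0 ≤ a t) (x : ℕ) : 0 ≤ tailSum a x :=
  tsum_nonneg fun _ => ha0 _

theorem antitone_tailSum (ha : Summable a) (ha0 : ∀ t, 0 ≤ a t) : Antitone (tailSum a) :=
  fun _ _ h => sub_nonneg.1 <|
    (tailSum_sub_tailSum ha h).symm ▸ Finset.sum_nonneg fun t _ => ha0 t

theorem tailSum_succ_lt (ha : Summable a) {x : ℕ} (h : 0 < a (x + 1)) :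
    tailSum a (x + 1) < tailSum a x := by
  have := tailSum_sub_tailSum ha (Nat.le_succ x)
  rw [Nat.Ioc_succ_singleton, Finset.sum_singleton] at this
  linarith

theorem abs_sub_le_localOsc {d x k : ℕ} (hk : k ∈ Finset.Icc (x - d) (x + d)) :
    |a k - a x| ≤ localOsc a d x :=
  Finset.le_sup' (fun k => |a k - a x|) hk

theorem localOsc_nonneg (d x : ℕ) : 0 ≤ localOsc a d x :=
  (abs_nonneg _).trans (abs_sub_le_localOsc (k := x) (Finset.mem_Icc.2 ⟨by omega, by omega⟩))

theorem tailSum_le_of_mem_window (ha : Summable a) {d x k : ℕ}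
    (hk : k ∈ Finset.Icc (x - d) (x + d)) :
    tailSum a k ≤ tailSum a x - ((k : ℝ) - x) * a x + d * localOsc a d x := by
  have hosc := localOsc_nonneg (a := a) d x
  have hwin : ∀ t, x - d ≤ t → t ≤ x + d → |a t - a x| ≤ localOsc a d x :=
    fun t h₁ h₂ => abs_sub_le_localOsc (Finset.mem_Icc.2 ⟨h₁, h₂⟩)
  rw [Finset.mem_Icc] at hk
  rcases le_total x k with hxk | hkx
  · have hsum : ((k - x : ℕ) : ℝ) * (a x - localOsc a d x) ≤ ∑ t ∈ Finset.Ioc x k, a t := by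
      simpa using Finset.card_nsmul_le_sum (Finset.Ioc x k) a _ fun t ht => by
        rw [Finset.mem_Ioc] at ht
        linarith [(abs_le.1 (hwin t (by omega) (by omega))).1]
    have hdist : ((k - x : ℕ) : ℝ) ≤ d := by exact_mod_cast (by omega : k - x ≤ d)
    rw [Nat.cast_sub hxk] at hsum hdist
    nlinarith [tailSum_sub_tailSum ha hxk]
  · have hsum : ∑ t ∈ Finset.Ioc k x, a t ≤ ((x - k : ℕ) : ℝ) * (a x + localOsc a d x) := by
      simpa using Finset.sum_le_card_nsmul (Finset.Ioc k x) a _ fun t ht => by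
        rw [Finset.mem_Ioc] at ht
        linarith [(abs_le.1 (hwin t (by omega) (by omega))).2]
    have hdist : ((x - k : ℕ) : ℝ) ≤ d := by exact_mod_cast (by omega : x - k ≤ d)
    rw [Nat.cast_sub hkx] at hsum hdist
    nlinarith [tailSum_sub_tailSum ha hkx]

theorem sum_mul_tailSum_le (ha : Summable a) {d x : ℕ} {p : ℕ → ℝ} (hp0 : ∀ k, 0 ≤ p k)
    (hp1 : ∑ k ∈ Finset.Icc (x - d) (x + d), p k = 1) :
    ∑ k ∈ Finset.Icc (x - d) (x + d), p k * tailSum a k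
      ≤ tailSum a x - (∑ k ∈ Finset.Icc (x - d) (x + d), p k * ((k : ℝ) - x)) * a x
        + d * localOsc a d x := by
  calc ∑ k ∈ Finset.Icc (x - d) (x + d), p k * tailSum a k
      ≤ ∑ k ∈ Finset.Icc (x - d) (x + d),
          p k * (tailSum a x - ((k : ℝ) - x) * a x + d * localOsc a d x) :=
        Finset.sum_le_sum fun k hk =>
          mul_le_mul_of_nonneg_left (tailSum_le_of_mem_window ha hk) (hp0 k)
    _ = _ := by
        simp only [mul_add, mul_sub, Finset.sum_add_distrib, Finset.sum_sub_distrib,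
          ← Finset.sum_mul, hp1, ← mul_assoc]
        ring

end TailSum

namespace MarkovChain

theorem transient_of_drift_criterion {M : MarkovChain} {d : ℕ} {γ : ℕ → ℝ}
    (hirr : M.Irreducible) (hub : M.UniformlyBounded d) (hdrift : ∀ x, M.drift x = γ x)
    (hsum : Summable fun x => γ x ^ 2) (hpos : ∀ᶠ x in atTop, 0 < γ x)
    (hcrit : ∀ᶠ x in atTop, d * localOsc (fun k => γ k ^ 2) d x ≤ 1 / 2 * γ x ^ 3) :
    M.Transient := by
  obtain ⟨N, hN⟩ := eventually_atTop.1 (hpos.and hcrit)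
  have hsq0 : ∀ t, 0 ≤ γ t ^ 2 := fun t => sq_nonneg _
  refine transient_of_superharmonic hirr (tailSum_nonneg hsq0) (antitone_tailSum hsum hsq0)
    (N := N) (fun x hx => tailSum_succ_lt hsum (pow_pos (hN (x + 1) (by omega)).1 2))
    fun x hx => ?_
  obtain ⟨hγx, hcx⟩ := hN x hx
  rw [hub.tsum_mul_ofReal (tailSum_nonneg hsq0)]
  refine ENNReal.ofReal_le_ofReal ((sum_mul_tailSum_le hsum (fun _ => ENNReal.toReal_nonneg)
    (hub.sum_toReal_p x)).trans ?_)
  rw [← hub.drift_eq_sum, hdrift]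
  nlinarith [pow_pos hγx 3]

end MarkovChain

theorem Real.abs_rpow_neg_sub_rpow_neg_le {β m a b : ℝ} (hβ : 0 ≤ β) (hm : 0 < m) (ha : m ≤ a)
    (hb : m ≤ b) : |a ^ (-β) - b ^ (-β)| ≤ β * m ^ (-β - 1) * |a - b| := by
  have hderiv : ∀ x ∈ Set.Ici m, HasDerivWithinAt (fun x : ℝ => x ^ (-β))
      (-β * x ^ (-β - 1)) (Set.Ici m) x := fun x hx =>
    (Real.hasDerivAt_rpow_const (Or.inl (hm.trans_le hx).ne')).hasDerivWithinAt
  have hbound : ∀ x ∈ Set.Ici m, ‖-β * x ^ (-β - 1)‖ ≤ β * m ^ (-β - 1) := fun x hx => by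
    rw [norm_mul, norm_neg, Real.norm_of_nonneg hβ,
      Real.norm_of_nonneg (Real.rpow_nonneg (hm.le.trans hx) _)]
    exact mul_le_mul_of_nonneg_left
      (Real.rpow_le_rpow_of_nonpos hm hx (by linarith)) hβ
  simpa using (convex_Ici m).norm_image_sub_le_of_norm_hasDerivWithin_le hderiv hbound hb ha

theorem mul_rpow_neg_pow (C α : ℝ) {x : ℝ} (hx : 0 ≤ x) (n : ℕ) :
    (C * x ^ (-α)) ^ n = C ^ n * x ^ (-(n * α)) := by
  rw [mul_pow, ← Real.rpow_mul_natCast hx]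
  ring_nf

theorem abs_sq_sub_sq_le_of_mem_window {γ ε : ℕ → ℝ} {C α K : ℝ} {d i k : ℕ} (hα : 0 < α)
    (hγ : ∀ x : ℕ, 1 ≤ x → γ x = C * (x : ℝ) ^ (-α) * (1 + ε x))
    (hi : 1 ≤ i) (hdi : 2 * d ≤ i) (hKi : K ≤ i)
    (hε : ∀ x ∈ Finset.Icc (i - d) (i + d), |ε x| ≤ K / i)
    (hk : k ∈ Finset.Icc (i - d) (i + d)) :
    |γ k ^ 2 - γ i ^ 2|
      ≤ C ^ 2 * (8 * α * 2 ^ (2 * α + 1) * d + 8 * K) * (i : ℝ) ^ (-(2 * α) - 1) := by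
  have hi0 : (0 : ℝ) < i := by exact_mod_cast hi
  have hik := Finset.mem_Icc.1 hk
  have hsq : ∀ x : ℕ, 1 ≤ x → γ x ^ 2 = C ^ 2 * ((x : ℝ) ^ (-(2 * α)) * (1 + ε x) ^ 2) := by
    intro x hx
    rw [hγ x hx, mul_pow, mul_rpow_neg_pow C α (Nat.cast_nonneg x)]
    ring_nf
  set u : ℝ → ℝ := fun x => x ^ (-(2 * α))
  have hKi1 : K / i ≤ 1 := (div_le_one hi0).2 hKi
  have hεk := hε k hk
  have hεi := hε i (Finset.mem_Icc.2 ⟨by omega, by omega⟩)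
  have hεk1 := abs_le.1 (hεk.trans hKi1)
  have hεi1 := abs_le.1 (hεi.trans hKi1)
  have hdist : |(k : ℝ) - i| ≤ d := by
    have h₁ : (i : ℝ) ≤ k + d := by exact_mod_cast (by omega : i ≤ k + d)
    have h₂ : (k : ℝ) ≤ i + d := by exact_mod_cast hik.2
    exact abs_le.2 ⟨by linarith, by linarith⟩
  have hpow : (i / 2 : ℝ) ^ (-(2 * α) - 1) = 2 ^ (2 * α + 1) * (i : ℝ) ^ (-(2 * α) - 1) := by
    rw [Real.div_rpow hi0.le zero_le_two, div_eq_mul_inv, ← Real.rpow_neg zero_le_two]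
    ring_nf
  have hu : |u k - u i| ≤ 2 * α * 2 ^ (2 * α + 1) * d * (i : ℝ) ^ (-(2 * α) - 1) := by
    have hk2 : (i / 2 : ℝ) ≤ k := by
      have : (i : ℝ) ≤ 2 * k := by exact_mod_cast (by omega : i ≤ 2 * k)
      linarith
    calc |u k - u i| ≤ 2 * α * (i / 2 : ℝ) ^ (-(2 * α) - 1) * |(k : ℝ) - i| :=
          Real.abs_rpow_neg_sub_rpow_neg_le (by linarith) (by linarith) hk2 (by linarith)
      _ ≤ 2 * α * (i / 2 : ℝ) ^ (-(2 * α) - 1) * d :=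
          mul_le_mul_of_nonneg_left hdist (by positivity)
      _ = _ := by rw [hpow]; ring
  have hv : |(1 + ε k) ^ 2 - (1 + ε i) ^ 2| ≤ 8 * (K / i) := by
    rw [show (1 + ε k) ^ 2 - (1 + ε i) ^ 2 = (ε k - ε i) * (2 + ε k + ε i) by ring, abs_mul]
    have h1 : |ε k - ε i| ≤ 2 * (K / i) := (abs_sub _ _).trans (by linarith)
    have h2 : |2 + ε k + ε i| ≤ 4 := abs_le.2 ⟨by linarith, by linarith⟩
    have hK0 : 0 ≤ K / i := (abs_nonneg _).trans hεk
    linarith [mul_le_mul h1 h2 (abs_nonneg _) (by positivity)]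
  have hui : u i * (K / i) = K * (i : ℝ) ^ (-(2 * α) - 1) := by
    simp only [u, Real.rpow_sub hi0, Real.rpow_one]
    ring
  have hu0 : 0 ≤ u i := Real.rpow_nonneg hi0.le _
  have hvk : (1 + ε k) ^ 2 ≤ 4 := by nlinarith [hεk1.1, hεk1.2]
  rw [hsq k (by omega), hsq i hi, ← mul_sub, abs_mul, abs_of_nonneg (sq_nonneg C), mul_assoc]
  refine mul_le_mul_of_nonneg_left ?_ (sq_nonneg C)
  calc |u k * (1 + ε k) ^ 2 - u i * (1 + ε i) ^ 2|
      = |(u k - u i) * (1 + ε k) ^ 2 + u i * ((1 + ε k) ^ 2 - (1 + ε i) ^ 2)| := by ring_nf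
    _ ≤ |u k - u i| * 4 + u i * (8 * (K / i)) := by
        refine (abs_add_le _ _).trans (add_le_add ?_ ?_)
        · rw [abs_mul, abs_of_nonneg (sq_nonneg (1 + ε k))]
          exact mul_le_mul_of_nonneg_left hvk (abs_nonneg _)
        · rw [abs_mul, abs_of_nonneg hu0]
          exact mul_le_mul_of_nonneg_left hv hu0
    _ ≤ _ := by nlinarith

open Asymptotics Topology

theorem isLittleO_natCast_rpow_rpow {s t : ℝ} (h : s < t) :
    (fun n : ℕ => (n : ℝ) ^ s) =o[atTop] fun n : ℕ => (n : ℝ) ^ t := by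
  have h0 : Tendsto (fun n : ℕ => (n : ℝ) ^ (s - t)) atTop (𝓝 0) := by
    have := (tendsto_rpow_neg_atTop (by linarith : 0 < t - s)).comp tendsto_natCast_atTop_atTop
    simpa only [neg_sub, Function.comp_def] using this
  refine (((isLittleO_one_iff ℝ).2 h0).mul_isBigO
    (isBigO_refl (fun n : ℕ => (n : ℝ) ^ t) atTop)).congr' ?_ ?_
  · filter_upwards [eventually_gt_atTop 0] with n hn
    rw [← Real.rpow_add (by positivity), sub_add_cancel]
  · simp

section Perturbation

variable {γ ε : ℕ → ℝ} {C α : ℝ}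

theorem isEquivalent_of_tendsto_zero
    (hγ : ∀ i : ℕ, 1 ≤ i → γ i = C * (i : ℝ) ^ (-α) * (1 + ε i)) (hε : Tendsto ε atTop (𝓝 0)) :
    γ ~[atTop] fun i : ℕ => C * (i : ℝ) ^ (-α) := by
  refine isEquivalent_iff_exists_eq_mul.2 ⟨fun i => 1 + ε i, by simpa using hε.const_add 1, ?_⟩
  filter_upwards [eventually_ge_atTop 1] with i hi
  simp only [Pi.mul_apply, hγ i hi]
  ring

theorem summable_sq_of_isEquivalent (hα : 1 / 2 < α)
    (h : γ ~[atTop] fun i : ℕ => C * (i : ℝ) ^ (-α)) :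
    Summable fun i => γ i ^ 2 := by
  refine summable_of_isBigO_nat
    ((Real.summable_nat_rpow.2 (by linarith : -(2 * α) < -1)).mul_left (C ^ 2))
    ((h.pow 2).isBigO.congr_right fun i => ?_)
  simp [mul_rpow_neg_pow C α (Nat.cast_nonneg i)]

theorem isBigO_localOsc_sq (hα : 0 < α) {d : ℕ}
    (hγ : ∀ i : ℕ, 1 ≤ i → γ i = C * (i : ℝ) ^ (-α) * (1 + ε i)) {K : ℝ} {i₁ : ℕ}
    (hε : ∀ i, i₁ ≤ i → ∀ k ∈ Finset.Icc (i - d) (i + d), |ε k| ≤ K / i) :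
    (fun i => localOsc (fun k => γ k ^ 2) d i) =O[atTop] fun i : ℕ => (i : ℝ) ^ (-(2 * α) - 1) := by
  refine IsBigO.of_bound (C ^ 2 * (8 * α * 2 ^ (2 * α + 1) * d + 8 * K)) ?_
  filter_upwards [eventually_ge_atTop (max (max i₁ (2 * d + 1)) ⌈K⌉₊)] with i hi
  have hKi : K ≤ i := (Nat.le_ceil K).trans (by exact_mod_cast (le_max_right _ _).trans hi)
  rw [Real.norm_of_nonneg (localOsc_nonneg _ _), Real.norm_of_nonneg (by positivity)]
  exact Finset.sup'_le _ _ fun k hk =>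
    abs_sq_sub_sq_le_of_mem_window hα hγ (by omega) (by omega) hKi (hε i (by omega)) hk

theorem eventually_mul_localOsc_sq_le (hC : C ≠ 0) (hα₀ : 0 < α) (hα₁ : α < 1) {d : ℕ}
    (hγ : ∀ i : ℕ, 1 ≤ i → γ i = C * (i : ℝ) ^ (-α) * (1 + ε i)) {K : ℝ} {i₁ : ℕ}
    (hε : ∀ i, i₁ ≤ i → ∀ k ∈ Finset.Icc (i - d) (i + d), |ε k| ≤ K / i)
    (hequiv : γ ~[atTop] fun i : ℕ => C * (i : ℝ) ^ (-α)) (hpos : ∀ᶠ i in atTop, 0 < γ i) :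
    ∀ᶠ i in atTop, d * localOsc (fun k => γ k ^ 2) d i ≤ 1 / 2 * γ i ^ 3 := by
  have hcube : (fun i : ℕ => (i : ℝ) ^ (-(3 * α))) =O[atTop] fun i => γ i ^ 3 :=
    ((hequiv.pow 3).symm.isBigO.const_mul_left (C ^ 3)⁻¹).congr_left fun i => by
      simp [mul_rpow_neg_pow C α (Nat.cast_nonneg i), hC]
  have hlittle := ((isBigO_localOsc_sq hα₀ hγ hε).trans_isLittleO
    ((isLittleO_natCast_rpow_rpow (by linarith)).trans_isBigO hcube)).const_mul_left (d : ℝ)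
  filter_upwards [hlittle.bound one_half_pos, hpos] with i hi hγi
  rw [Real.norm_of_nonneg (mul_nonneg d.cast_nonneg (localOsc_nonneg _ _)),
    Real.norm_of_nonneg (by positivity)] at hi
  exact hi

end Perturbation

/-- drifts of the form `γ_i = C i^{-α} (1 + ε_i)` with
`1/2 < α < 1` and locally `O(1/i)` perturbations satisfy the transience
criterion, so the corresponding uniformly bounded chains are transient. -/
theorem stmt10 (d : ℕ) (γ ε : ℕ → ℝ) (C α : ℝ)
    (hC : 0 < C) (hα₁ : 1 / 2 < α) (hα₂ : α < 1)
    (hγ : ∀ i : ℕ, 1 ≤ i → γ i = C * (i : ℝ) ^ (-α) * (1 + ε i))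
    (hε : ∃ K : ℝ, ∃ i₁ : ℕ, ∀ i : ℕ, i₁ ≤ i →
      ((Finset.Icc (i - d) (i + d)).sup'
          (Finset.nonempty_Icc.mpr (by omega)) fun k => |ε k|)
        ≤ K / i)
    (N₀ : ℕ) (hpos : ∀ i, N₀ ≤ i → 0 < γ i) :
    (Summable fun i => γ i ^ 2) ∧
    (∃ N : ℕ, ∀ i, N ≤ i →
      (d : ℝ) * ((Finset.Icc (i - d) (i + d)).sup'
          (Finset.nonempty_Icc.mpr (by omega))
          fun k => |γ k ^ 2 - γ i ^ 2|)
        ≤ (1 / 2) * γ i ^ 3) ∧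
    (∀ M : MarkovChain, M.Irreducible → M.UniformlyBounded d →
      (∀ i, M.DriftFinite i) → (∀ i, M.drift i = γ i) → M.Transient) := by
  obtain ⟨K, i₁, hK⟩ := hε
  have hεw : ∀ i, i₁ ≤ i → ∀ k ∈ Finset.Icc (i - d) (i + d), |ε k| ≤ K / i :=
    fun i hi k hk => (Finset.le_sup' (fun k => |ε k|) hk).trans (hK i hi)
  have hε0 : Tendsto ε atTop (𝓝 0) :=
    squeeze_zero_norm' (eventually_atTop.2 ⟨i₁, fun i hi =>
      hεw i hi i (Finset.mem_Icc.2 ⟨by omega, by omega⟩)⟩) (tendsto_const_div_atTop_nhds_zero_nat K)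
  have hequiv := isEquivalent_of_tendsto_zero hγ hε0
  have hsum := summable_sq_of_isEquivalent hα₁ hequiv
  have hγpos : ∀ᶠ i in atTop, 0 < γ i := eventually_atTop.2 ⟨N₀, hpos⟩
  have hcrit := eventually_mul_localOsc_sq_le hC.ne' (by linarith) hα₂ hγ hεw hequiv hγpos
  exact ⟨hsum, eventually_atTop.1 hcrit, fun M hirr hub _ hdrift =>
    M.transient_of_drift_criterion hirr hub hdrift hsum hγpos hcrit⟩
end
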